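/- Let R be a principal ideal domain, Λ a free R-module of rank 2m with a non-degenerate alternating form of square-free level N (i.e. N·Λ^# ⊆ Λ ⊆ Λ^# with N square-free), and Z a primitive totally isotropic submodule of Λ of rank r. Then there exist a basis e_1,…,e_r of Z and vectors f_1,…,f_r ∈ Λ spanning a totally isotropic submodule with ⟨e_i,f_j⟩ = d_i δ_{ij}, d_i | N, such that M = ⊕ R e_i ⊕ ⊕ R f_i splits off orthogonally: Λ = M ⊥ Λ'. -/

import Mathlib

/-!
Induction on the rank of `Z`. As `Λ / Z` is torsion-free, hence free, a basis vector `e` of `Z`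
admits a functional `φ` with `φ e = 1`, and the level condition produces `v` with
`⟨e, v⟩ = -N`. Let `d` generate the ideal `⟨e, Λ⟩`, so `d ∣ N`. Since `N` is squarefree, `d` and
`N / d` are coprime, and a Bézout combination `f` of `v` and a vector `w` with `⟨e, w⟩ = d`
satisfies `⟨e, f⟩ = d` and `⟨f, Λ⟩ ⊆ dR`. Dividing `⟨e, ·⟩` and `⟨f, ·⟩` by `d` shows that
`Λ = span {e, f} ⊕ Λ₁` with `Λ₁` the orthogonal of `e` and `f`. The form restricted to `Λ₁` is
again non-degenerate of level dividing `N`, and `Z ∩ Λ₁` is a primitive isotropic submodule of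
`Λ₁` of rank one less, complementary to `R e` in `Z`; splitting it inside `Λ₁` and adding
`e, f` in front gives the splitting of `Z`.
-/

open Module LinearMap Submodule

section Module

variable {R M : Type*} [CommRing R] [AddCommGroup M] [Module R M]

theorem LinearMap.exists_mul_eq_of_forall_dvd [IsDomain R] {d : R} (hd : d ≠ 0) (φ : M →ₗ[R] R)
    (h : ∀ x, d ∣ φ x) : ∃ ψ : M →ₗ[R] R, ∀ x, d * ψ x = φ x := by
  choose ψ hψ using h
  refine ⟨⟨⟨ψ, fun x y => mul_left_cancel₀ hd ?_⟩, fun c x => mul_left_cancel₀ hd ?_⟩,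
    fun x => (hψ x).symm⟩
  · rw [← hψ, mul_add, ← hψ, ← hψ, map_add]
  · rw [← hψ, RingHom.id_apply, smul_eq_mul, mul_left_comm, ← hψ, map_smul, smul_eq_mul]

theorem LinearMap.ker_eq_ker_of_mul_eq [IsDomain R] {d : R} (hd : d ≠ 0) {φ ψ : M →ₗ[R] R}
    (h : ∀ x, d * ψ x = φ x) : ker ψ = ker φ := by
  ext x
  rw [mem_ker, mem_ker, ← h, mul_eq_zero, or_iff_right hd]

theorem Submodule.isTorsionFree_quotient [IsDomain R] {Z : Submodule R M}
    (hZ : ∀ (x : M) (c : R), c ≠ 0 → c • x ∈ Z → x ∈ Z) : IsTorsionFree R (M ⧸ Z) := by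
  refine .of_smul_eq_zero fun c x hcx => ?_
  induction x using Submodule.Quotient.induction_on with | _ x => ?_
  rw [← Submodule.Quotient.mk_smul, Submodule.Quotient.mk_eq_zero] at hcx
  rw [Submodule.Quotient.mk_eq_zero]
  exact or_iff_not_imp_left.mpr fun hc => hZ x c hc hcx

theorem Submodule.exists_apply_basis_eq_one [IsDomain R] [IsPrincipalIdealRing R]
    [Module.Finite R M] {Z : Submodule R M} [IsTorsionFree R (M ⧸ Z)] {ι : Type*}
    (b : Basis ι R Z) (i : ι) : ∃ φ : M →ₗ[R] R, φ (b i) = 1 := by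
  obtain ⟨s, hs⟩ := Module.projective_lifting_property Z.mkQ LinearMap.id Z.mkQ_surjective
  have hsplit : (∃ l, Z.mkQ ∘ₗ l = .id) → ∃ l, l ∘ₗ Z.subtype = .id :=
    (((LinearMap.exact_subtype_mkQ Z).split_tfae Z.injective_subtype Z.mkQ_surjective).out 0 1).mp
  obtain ⟨p, hp⟩ := hsplit ⟨s, hs⟩
  refine ⟨b.coord i ∘ₗ p, ?_⟩
  change b.coord i ((p ∘ₗ Z.subtype) (b i)) = 1
  simp [hp]

theorem Submodule.span_singleton_sup_inf_ker {Z : Submodule R M} {e : M} (he : e ∈ Z)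
    {ψ : M →ₗ[R] R} (hψ : ψ e = 1) : span R {e} ⊔ Z ⊓ ker ψ = Z := by
  refine le_antisymm (sup_le ((span_singleton_le_iff_mem _ _).mpr he) inf_le_left) fun z hz => ?_
  have hker : z - ψ z • e ∈ Z ⊓ ker ψ :=
    ⟨Z.sub_mem hz (Z.smul_mem _ he), by simp [hψ]⟩
  simpa using add_mem_sup (smul_mem _ (ψ z) (mem_span_singleton_self e)) hker

theorem Submodule.finrank_inf_ker_add_one [IsDomain R] {Z : Submodule R M} [Module.Finite R Z]
    {e : M} (he : e ∈ Z) {ψ : M →ₗ[R] R} (hψ : ψ e = 1) :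
    finrank R ↥(Z ⊓ ker ψ) + 1 = finrank R Z := by
  set g := ψ ∘ₗ Z.subtype
  have hsurj : Function.Surjective g := fun c => ⟨c • (⟨e, he⟩ : Z), by simp [g, hψ]⟩
  have hker : finrank R ↥(Z ⊓ ker ψ) = finrank R (ker g) := by
    rw [← Z.finrank_map_subtype_eq (ker g), ker_comp, map_comap_subtype]
  rw [hker, ← finrank_self R, ← (g.quotKerEquivOfSurjective hsurj).finrank_eq, add_comm,
    Submodule.finrank_quotient_add_finrank]

theorem Submodule.isCompl_sup_map_subtype {P Q : Submodule R M} (hPQ : IsCompl P Q)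
    {A C : Submodule R Q} (hAC : IsCompl A C) :
    IsCompl (P ⊔ A.map Q.subtype) (C.map Q.subtype) := by
  have hsup : A.map Q.subtype ⊔ C.map Q.subtype = Q := by
    rw [← map_sup, hAC.sup_eq_top, map_top, range_subtype]
  constructor
  · refine Disjoint.disjoint_sup_left_of_disjoint_sup_right
      (disjoint_map Q.injective_subtype hAC.disjoint) ?_
    rw [hsup]
    exact hPQ.disjoint
  · rw [codisjoint_iff, sup_assoc, hsup, hPQ.sup_eq_top]

theorem Submodule.span_range_cons_subtype {n : ℕ} (e : M) (Q : Submodule R M) (v : Fin n → Q) :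
    span R (Set.range (Fin.cons e (Q.subtype ∘ v) : Fin (n + 1) → M)) =
      span R {e} ⊔ (span R (Set.range v)).map Q.subtype := by
  rw [Fin.range_cons, Set.range_comp, span_insert, span_image]

theorem Submodule.span_range_cons_union_range_cons_subtype {n : ℕ} (e f : M) (Q : Submodule R M)
    (v w : Fin n → Q) :
    span R (Set.range (Fin.cons e (Q.subtype ∘ v) : Fin (n + 1) → M) ∪
      Set.range (Fin.cons f (Q.subtype ∘ w) : Fin (n + 1) → M)) =
      span R {e, f} ⊔ (span R (Set.range v ∪ Set.range w)).map Q.subtype := by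
  rw [span_union, span_range_cons_subtype, span_range_cons_subtype, span_union, Submodule.map_sup,
    span_insert, sup_sup_sup_comm]

theorem Submodule.linearIndependent_cons_subtype {n : ℕ} {e : M} {Q : Submodule R M}
    (he : ∀ c : R, c • e ∈ Q → c = 0) {v : Fin n → Q} (hv : LinearIndependent R v) :
    LinearIndependent R (Fin.cons e (Q.subtype ∘ v) : Fin (n + 1) → M) := by
  refine (hv.map' _ Q.ker_subtype).finCons' e _ fun c y hy hcy => he c ?_
  rw [Set.range_comp, span_image] at hy
  rw [eq_neg_of_add_eq_zero_left hcy]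
  exact Q.neg_mem (map_subtype_le Q _ hy)

end Module

namespace LinearMap.BilinForm

variable {R M : Type*} [CommRing R] [AddCommGroup M] [Module R M] {B : LinearMap.BilinForm R M}

/-- `N • Λ^# ⊆ Λ`, i.e. the level of `B` divides `N`. -/
def LevelDvd (B : LinearMap.BilinForm R M) (N : R) : Prop :=
  ∀ φ : M →ₗ[R] R, ∃ v, ∀ x, N * φ x = B v x

theorem separatingLeft_restrict_of_isCompl (hB : B.IsRefl) (hnd : B.SeparatingLeft)
    {P Q : Submodule R M} (hPQ : IsCompl P Q) (horth : ∀ x ∈ P, ∀ y ∈ Q, B x y = 0) :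
    (B.restrict Q).SeparatingLeft := by
  rw [separatingLeft_iff_ker_eq_bot] at hnd ⊢
  rw [ker_restrict_eq_of_codisjoint hPQ.symm.codisjoint
    fun x hx y hy => hB.eq_iff.mp (horth y hy x hx), hnd, comap_bot, ker_subtype]

theorem LevelDvd.restrict {N : R} (h : B.LevelDvd N) {P Q : Submodule R M} (hPQ : IsCompl P Q)
    (horth : ∀ x ∈ P, ∀ y ∈ Q, B x y = 0) : (B.restrict Q).LevelDvd N := by
  intro ψ
  obtain ⟨v, hv⟩ := h (ψ ∘ₗ Q.projectionOnto P hPQ.symm)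
  refine ⟨Q.projectionOnto P hPQ.symm v, fun x => ?_⟩
  have hv' := hv x
  rw [LinearMap.comp_apply, projectionOnto_apply_left] at hv'
  rw [hv', restrict_apply, coe_projectionOnto_apply]
  conv_lhs => rw [← projection_add_projection_eq_self hPQ v]
  rw [map_add, LinearMap.add_apply, horth _ (projection_apply_mem _ _) x x.2, zero_add]
  rfl

theorem apply_eq_zero_of_mem_span_pair {e f x y : M} (hx : x ∈ span R {e, f})
    (hy : y ∈ ker (B e) ⊓ ker (B f)) : B x y = 0 := by
  obtain ⟨a, b, rfl⟩ := mem_span_pair.mp hx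
  simp [mem_ker.mp hy.1, mem_ker.mp hy.2]

theorem isCompl_span_pair_ker_inf_ker [IsDomain R] (hB : B.IsAlt) {e f : M} {d : R} (hd : d ≠ 0)
    (hef : B e f = d) (hde : ∀ x, d ∣ B e x) (hdf : ∀ x, d ∣ B f x) :
    IsCompl (span R {e, f}) (ker (B e) ⊓ ker (B f)) := by
  have hfe : B f e = -d := by rw [← hB.neg_eq, hef]
  obtain ⟨ψe, hψe⟩ := (B e).exists_mul_eq_of_forall_dvd hd hde
  obtain ⟨ψf, hψf⟩ := (B f).exists_mul_eq_of_forall_dvd hd hdf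
  constructor
  · refine disjoint_def.mpr fun x hx hx' => ?_
    obtain ⟨a, b, rfl⟩ := mem_span_pair.mp hx
    have hb : b * d = 0 := by simpa [hB.self_eq_zero, hef] using hx'.1
    have ha : a * d = 0 := by simpa [hB.self_eq_zero, hfe] using hx'.2
    simp [(mul_eq_zero.mp ha).resolve_right hd, (mul_eq_zero.mp hb).resolve_right hd]
  · refine codisjoint_iff_le_sup.mpr fun x _ => ?_
    have hrest : x - ψe x • f + ψf x • e ∈ ker (B e) ⊓ ker (B f) := by
      rw [mem_inf, mem_ker, mem_ker]
      simp only [map_add, map_sub, map_smul, smul_eq_mul, hB.self_eq_zero, hef, hfe, ← hψe x,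
        ← hψf x]
      constructor <;> ring
    have hpair : ψe x • f - ψf x • e ∈ span R {e, f} :=
      sub_mem (smul_mem _ _ (subset_span (by simp))) (smul_mem _ _ (subset_span (by simp)))
    simpa using add_mem_sup hpair hrest

theorem exists_partner_of_levelDvd [IsDomain R] [IsPrincipalIdealRing R] (hB : B.IsAlt) {N : R}
    (hN : Squarefree N) (hlevel : B.LevelDvd N) {e : M} {φ : M →ₗ[R] R} (hφ : φ e = 1) :
    ∃ (f : M) (d : R), d ∣ N ∧ B e f = d ∧ (∀ x, d ∣ B e x) ∧ ∀ x, d ∣ B f x := by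
  obtain ⟨v, hv⟩ := hlevel φ
  set d := IsPrincipal.generator (range (B e))
  have hde : ∀ x, d ∣ B e x := fun x => (IsPrincipal.mem_iff_generator_dvd _).mp ⟨x, rfl⟩
  obtain ⟨w, hw⟩ : ∃ w, B e w = d := IsPrincipal.generator_mem (range (B e))
  have hev : B e v = -N := by rw [← hB.neg_eq, ← hv, hφ, mul_one]
  obtain ⟨c, hc⟩ : d ∣ N := by simpa [hev] using hde v
  obtain ⟨a, b, hab⟩ := (IsRelPrime.of_squarefree_mul (hc ▸ hN)).isCoprime
  refine ⟨(a * d) • w - b • v, d, ⟨c, hc⟩, ?_, hde, fun x => ⟨a * B w x - b * c * φ x, ?_⟩⟩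
  · simp only [map_sub, map_smul, smul_eq_mul, hw, hev]
    linear_combination d * hab + b * hc
  · simp only [map_sub, map_smul, LinearMap.sub_apply, LinearMap.smul_apply, smul_eq_mul, ← hv x]
    linear_combination (-(b * φ x)) * hc

theorem exists_pair_isCompl_ker_inf_ker [IsDomain R] [IsPrincipalIdealRing R] [Module.Free R M]
    [Module.Finite R M] (hB : B.IsAlt) {N : R} (hN : Squarefree N) (hlevel : B.LevelDvd N)
    {Z : Submodule R M} (hZprim : ∀ (x : M) (c : R), c ≠ 0 → c • x ∈ Z → x ∈ Z)
    (hZiso : ∀ x ∈ Z, ∀ y ∈ Z, B x y = 0) {r : ℕ} (hZrank : finrank R Z = r + 1) :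
    ∃ (e f : M) (d : R), d ≠ 0 ∧ d ∣ N ∧ B e f = d ∧
      IsCompl (span R {e, f}) (ker (B e) ⊓ ker (B f)) ∧
      span R {e} ⊔ ker (B e) ⊓ ker (B f) ⊓ Z = Z ∧
      finrank R ↥(ker (B e) ⊓ ker (B f) ⊓ Z) = r := by
  have := isTorsionFree_quotient hZprim
  let b := Module.finBasisOfFinrankEq R Z hZrank
  obtain ⟨φ, hφ⟩ := exists_apply_basis_eq_one b 0
  have he : (b 0 : M) ∈ Z := (b 0).2
  obtain ⟨f, d, hdN, hef, hde, hdf⟩ := exists_partner_of_levelDvd hB hN hlevel hφ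
  have hd : d ≠ 0 := ne_zero_of_dvd_ne_zero hN.ne_zero hdN
  obtain ⟨ψ, hψ⟩ := (-B f).exists_mul_eq_of_forall_dvd hd fun x => (hdf x).neg_right
  have hψe : ψ (b 0) = 1 := mul_left_cancel₀ hd <| by
    rw [hψ, LinearMap.neg_apply, ← hB.neg_eq, hef, neg_neg, mul_one]
  have hZe : Z ≤ ker (B (b 0)) := fun z hz => hZiso _ he z hz
  have hZQ : ker (B (b 0)) ⊓ ker (B f) ⊓ Z = Z ⊓ ker ψ := by
    rw [ker_eq_ker_of_mul_eq hd hψ, ker_neg, inf_right_comm, inf_eq_right.mpr hZe, inf_comm]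
  refine ⟨b 0, f, d, hd, hdN, hef, isCompl_span_pair_ker_inf_ker hB hd hef hde hdf, ?_, ?_⟩
  · rw [hZQ]
    exact span_singleton_sup_inf_ker he hψe
  · have := finrank_inf_ker_add_one he hψe
    rw [hZQ]
    omega

structure IsAdaptedSplitting (B : LinearMap.BilinForm R M) (N : R) (Z : Submodule R M) {r : ℕ}
    (e f : Fin r → M) (d : Fin r → R) (Λ' : Submodule R M) : Prop where
  linearIndependent : LinearIndependent R e
  span_eq : span R (Set.range e) = Z
  dvd : ∀ i, d i ∣ N
  apply_f_f : ∀ i j, B (f i) (f j) = 0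
  apply_e_f : ∀ i j, B (e i) (f j) = if i = j then d i else 0
  isCompl : IsCompl (span R (Set.range e ∪ Set.range f)) Λ'
  orthogonal : ∀ x ∈ span R (Set.range e ∪ Set.range f), ∀ y ∈ Λ', B x y = 0

theorem IsAdaptedSplitting.cons [IsDomain R] (hB : B.IsAlt) {N : R} {Z : Submodule R M}
    {e f : M} {d : R} (hd : d ≠ 0) (hef : B e f = d) (hdN : d ∣ N) {Q : Submodule R M}
    (hQ : Q ≤ ker (B e) ⊓ ker (B f)) (hPQ : IsCompl (span R {e, f}) Q)
    (hZ : span R {e} ⊔ Q ⊓ Z = Z) {r : ℕ} {e' f' : Fin r → Q} {d' : Fin r → R}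
    {Λ' : Submodule R Q} (h : IsAdaptedSplitting (B.restrict Q) N (Z.comap Q.subtype) e' f' d' Λ') :
    IsAdaptedSplitting B N Z (Fin.cons e (Q.subtype ∘ e')) (Fin.cons f (Q.subtype ∘ f'))
      (Fin.cons d d') (Λ'.map Q.subtype) := by
  have hQe : ∀ y ∈ Q, B e y = 0 := fun y hy => (hQ hy).1
  have hQf : ∀ y ∈ Q, B f y = 0 := fun y hy => (hQ hy).2
  have hfe : B f e = -d := by rw [← hB.neg_eq, hef]
  refine ⟨?_, ?_, ?_, ?_, ?_, ?_, ?_⟩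
  · refine linearIndependent_cons_subtype (fun c hc => ?_) h.linearIndependent
    have := hQf _ hc
    rw [map_smul, hfe, smul_eq_mul, mul_neg, neg_eq_zero] at this
    exact (mul_eq_zero.mp this).resolve_right hd
  · rw [span_range_cons_subtype, h.span_eq, map_comap_subtype, hZ]
  · exact Fin.cases hdN h.dvd
  · intro i j
    cases i using Fin.cases <;> cases j using Fin.cases <;>
      simp only [Fin.cons_zero, Fin.cons_succ, Function.comp_apply, subtype_apply]
    · exact hB.self_eq_zero f
    · exact hQf _ (coe_mem _)
    · exact hB.eq_iff.mp (hQf _ (coe_mem _))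
    · exact h.apply_f_f _ _
  · intro i j
    cases i using Fin.cases <;> cases j using Fin.cases <;>
      simp only [Fin.cons_zero, Fin.cons_succ, Function.comp_apply, subtype_apply]
    · simp [hef]
    · simp [hQe _ (coe_mem _), (Fin.succ_ne_zero _).symm]
    · simp [hB.eq_iff.mp (hQf _ (coe_mem _))]
    · simpa using h.apply_e_f _ _
  · rw [span_range_cons_union_range_cons_subtype]
    exact isCompl_sup_map_subtype hPQ h.isCompl
  · rw [span_range_cons_union_range_cons_subtype]
    intro x hx y hy
    obtain ⟨p, hp, q, hq, rfl⟩ := mem_sup.mp hx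
    obtain ⟨y, hy', rfl⟩ := mem_map.mp hy
    obtain ⟨q, hq', rfl⟩ := mem_map.mp hq
    simp only [subtype_apply, map_add, LinearMap.add_apply,
      apply_eq_zero_of_mem_span_pair hp (hQ y.2), zero_add]
    exact h.orthogonal q hq' y hy'

theorem isAdaptedSplitting_of_eq_bot {N : R} {Z : Submodule R M} (hZ : Z = ⊥) :
    IsAdaptedSplitting B N Z finZeroElim finZeroElim finZeroElim ⊤ where
  linearIndependent := linearIndependent_empty_type
  span_eq := by simp [hZ]
  dvd := finZeroElim
  apply_f_f := finZeroElim
  apply_e_f := finZeroElim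
  isCompl := by simpa using isCompl_bot_top
  orthogonal := by simp

theorem exists_isAdaptedSplitting [IsDomain R] [IsPrincipalIdealRing R] [Module.Free R M]
    [Module.Finite R M] (hB : B.IsAlt) (hnd : B.SeparatingLeft) {N : R} (hN : Squarefree N)
    (hlevel : B.LevelDvd N) {Z : Submodule R M}
    (hZprim : ∀ (x : M) (c : R), c ≠ 0 → c • x ∈ Z → x ∈ Z)
    (hZiso : ∀ x ∈ Z, ∀ y ∈ Z, B x y = 0) {r : ℕ} (hZrank : finrank R Z = r) :
    ∃ (e f : Fin r → M) (d : Fin r → R) (Λ' : Submodule R M),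
      IsAdaptedSplitting B N Z e f d Λ' := by
  induction r generalizing M with
  | zero => exact ⟨_, _, _, _, isAdaptedSplitting_of_eq_bot (finrank_eq_zero.mp hZrank)⟩
  | succ r ih =>
    obtain ⟨e, f, d, hd, hdN, hef, hPQ, hZ, hrank⟩ :=
      exists_pair_isCompl_ker_inf_ker hB hN hlevel hZprim hZiso hZrank
    set Q := ker (B e) ⊓ ker (B f)
    have horth : ∀ x ∈ span R {e, f}, ∀ y ∈ Q, B x y = 0 := fun x hx y hy =>
      apply_eq_zero_of_mem_span_pair hx hy
    obtain ⟨e', f', d', Λ', h⟩ := ih (B := B.restrict Q) (fun x => hB x)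
      (separatingLeft_restrict_of_isCompl hB.isRefl hnd hPQ horth) (hlevel.restrict hPQ horth)
      (Z := Z.comap Q.subtype) (fun x c hc hx => hZprim x c hc hx)
      (fun x hx y hy => hZiso x hx y hy)
      (by rw [← finrank_map_subtype_eq, map_comap_subtype, hrank])
    exact ⟨_, _, _, _, h.cons hB hd hef hdN le_rfl hPQ hZ⟩

end LinearMap.BilinForm

theorem stmt_1_general (R : Type*) [CommRing R] [IsDomain R] [IsPrincipalIdealRing R]
    (Λ : Type*) [AddCommGroup Λ] [Module R Λ] [Module.Free R Λ] [Module.Finite R Λ]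
    (B : LinearMap.BilinForm R Λ)
    (halt : ∀ x, B x x = 0)
    (hnd : ∀ x, (∀ y, B x y = 0) → x = 0)
    (N : R) (hNsf : Squarefree N)
    (hlevel : ∀ φ : Λ →ₗ[R] R, ∃ v : Λ, ∀ x, N * φ x = B v x)
    (Z : Submodule R Λ) (r : ℕ)
    (hZrank : Module.finrank R ↥Z = r)
    (hZprim : ∀ (x : Λ) (c : R), c ≠ 0 → c • x ∈ Z → x ∈ Z)
    (hZiso : ∀ x ∈ Z, ∀ y ∈ Z, B x y = 0) :
    ∃ (e f : Fin r → Λ) (d : Fin r → R) (Λ' : Submodule R Λ),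
      (∀ i, e i ∈ Z) ∧
      LinearIndependent R e ∧
      Submodule.span R (Set.range e) = Z ∧
      (∀ i, d i ∣ N) ∧
      (∀ i j, B (f i) (f j) = 0) ∧
      (∀ i j, B (e i) (f j) = if i = j then d i else 0) ∧
      IsCompl (Submodule.span R (Set.range e ∪ Set.range f)) Λ' ∧
      (∀ x ∈ Submodule.span R (Set.range e ∪ Set.range f), ∀ y ∈ Λ', B x y = 0) := by
  obtain ⟨e, f, d, Λ', h⟩ := LinearMap.BilinForm.exists_isAdaptedSplitting halt hnd hNsf hlevel
    hZprim hZiso hZrank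
  exact ⟨e, f, d, Λ', fun i => h.span_eq ▸ subset_span (Set.mem_range_self i),
    h.linearIndependent, h.span_eq, h.dvd, h.apply_f_f, h.apply_e_f, h.isCompl, h.orthogonal⟩

/-- Adapted para-symplectic splitting for a primitive totally isotropic
submodule of a lattice of square-free level `N`.  The square-free level condition
`N·Λ^# ⊆ Λ` is expressed intrinsically: every `R`-linear functional on `Λ`, after
multiplication by `N`, is represented by the form `B`. -/
theorem stmt_1 (R : Type*) [CommRing R] [IsDomain R] [IsPrincipalIdealRing R]
    (Λ : Type*) [AddCommGroup Λ] [Module R Λ] [Module.Free R Λ] [Module.Finite R Λ]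
    (m : ℕ) (hrank : Module.finrank R Λ = 2 * m)
    (B : LinearMap.BilinForm R Λ)
    (halt : ∀ x, B x x = 0)
    (hnd : ∀ x, (∀ y, B x y = 0) → x = 0)
    (N : R) (hN0 : N ≠ 0) (hNsf : Squarefree N)
    (hlevel : ∀ φ : Λ →ₗ[R] R, ∃ v : Λ, ∀ x, N * φ x = B v x)
    (Z : Submodule R Λ) (r : ℕ) (hr : r ≤ m)
    (hZrank : Module.finrank R ↥Z = r)
    (hZprim : ∀ (x : Λ) (c : R), c ≠ 0 → c • x ∈ Z → x ∈ Z)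
    (hZiso : ∀ x ∈ Z, ∀ y ∈ Z, B x y = 0) :
    ∃ (e f : Fin r → Λ) (d : Fin r → R) (Λ' : Submodule R Λ),
      (∀ i, e i ∈ Z) ∧
      LinearIndependent R e ∧
      Submodule.span R (Set.range e) = Z ∧
      (∀ i, d i ∣ N) ∧
      (∀ i j, B (f i) (f j) = 0) ∧
      (∀ i j, B (e i) (f j) = if i = j then d i else 0) ∧
      IsCompl (Submodule.span R (Set.range e ∪ Set.range f)) Λ' ∧
      (∀ x ∈ Submodule.span R (Set.range e ∪ Set.range f), ∀ y ∈ Λ', B x y = 0) :=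
  stmt_1_general R Λ B halt hnd N hNsf hlevel Z r hZrank hZprim hZiso
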